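/- arXiv:1710.08472 — 8 statements merged into one kernel-verified Lean document; each statement's English description precedes it below -/
import Mathlib

section
/- Let Z be a metric space, X and Y compact subsets of Z, γ : X → Y a nearest-point selection, A a nonempty closed subset of X, and B a nonempty closed subset of Y. Then the Hausdorff distance between A and B is at least the Hausdorff distance between A and the closure of γ(A). -/
open Metric Set

theorem stmt_2 {Z : Type*} [MetricSpace Z] (X Y : Set Z)
    (hX : IsCompact X) (hY : IsCompact Y) (hXne : X.Nonempty) (hYne : Y.Nonempty)
    (γ : Z → Z) (hγY : ∀ x ∈ X, γ x ∈ Y)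
    (hγ : ∀ x ∈ X, infDist x Y = dist x (γ x))
    (A : Set Z) (hA : A ⊆ X) (hAne : A.Nonempty) (hAc : IsClosed A)
    (B : Set Z) (hB : B ⊆ Y) (hBne : B.Nonempty) (hBc : IsClosed B) :
    hausdorffDist A (closure (γ '' A)) ≤ hausdorffDist A B := by
  have hAbd : Bornology.IsBounded A := (hX.isBounded).subset hA
  have hBbd : Bornology.IsBounded B := (hY.isBounded).subset hB
  have hfin : EMetric.hausdorffEdist A B ≠ ⊤ :=
    Metric.hausdorffEdist_ne_top_of_nonempty_of_bounded hAne hBne hAbd hBbd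
  have key : ∀ a ∈ A, dist a (γ a) ≤ hausdorffDist A B := by
    intro a ha
    have h1 : dist a (γ a) = infDist a Y := (hγ a (hA ha)).symm
    have h2 : infDist a Y ≤ infDist a B := infDist_le_infDist_of_subset hB hBne
    have h3 : infDist a B ≤ hausdorffDist A B := infDist_le_hausdorffDist_of_mem ha hfin
    linarith
  rw [hausdorffDist_closure₂]
  apply hausdorffDist_le_of_infDist hausdorffDist_nonneg
  · intro a ha
    calc infDist a (γ '' A) ≤ dist a (γ a) :=
          infDist_le_dist_of_mem (mem_image_of_mem γ ha)
      _ ≤ _ := key a ha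
  · rintro y ⟨a, ha, rfl⟩
    calc infDist (γ a) A ≤ dist (γ a) a := infDist_le_dist_of_mem ha
      _ = dist a (γ a) := dist_comm _ _
      _ ≤ _ := key a ha
end

section
/- Let Z be a metric space, X and Y compact subsets of Z, γ : X → Y a nearest-point selection, and A a nonempty closed subset of X. Then the infimum over all nonempty closed subsets B of Y of the Hausdorff distance d_H(A, B) equals d_H(A, closure(γ(A))), i.e., the closure of γ(A) is a closest element of the hyperspace of Y to A. -/
open Metric Set

theorem stmt_3 {Z : Type*} [MetricSpace Z] (X Y : Set Z)
    (hX : IsCompact X) (hY : IsCompact Y) (hXne : X.Nonempty) (hYne : Y.Nonempty)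
    (γ : Z → Z) (hγY : ∀ x ∈ X, γ x ∈ Y)
    (hγ : ∀ x ∈ X, infDist x Y = dist x (γ x))
    (A : Set Z) (hA : A ⊆ X) (hAne : A.Nonempty) (hAc : IsClosed A) :
    ⨅ B : {B : Set Z // B.Nonempty ∧ IsClosed B ∧ B ⊆ Y}, hausdorffDist A (B : Set Z)
      = hausdorffDist A (closure (γ '' A)) := by
  set C := closure (γ '' A) with hC
  have hCne : C.Nonempty := hAne.image γ |>.closure
  have hCsub : C ⊆ Y := closure_minimal (by
    rintro _ ⟨a, ha, rfl⟩; exact hγY a (hA ha)) hY.isClosed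
  have hAb : Bornology.IsBounded A := (hX.isBounded).subset hA
  have hYb : Bornology.IsBounded Y := hY.isBounded
  -- key: for any closed nonempty B ⊆ Y, hausdorffDist A C ≤ hausdorffDist A B
  have key : ∀ B : {B : Set Z // B.Nonempty ∧ IsClosed B ∧ B ⊆ Y},
      hausdorffDist A C ≤ hausdorffDist A (B : Set Z) := by
    rintro ⟨B, hBne, hBc, hBY⟩
    have hEd : EMetric.hausdorffEdist A B ≠ ⊤ :=
      hausdorffEdist_ne_top_of_nonempty_of_bounded hAne hBne hAb (hYb.subset hBY)
    have hstep : ∀ a ∈ A, dist a (γ a) ≤ hausdorffDist A B := by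
      intro a ha
      calc dist a (γ a) = infDist a Y := (hγ a (hA ha)).symm
        _ ≤ infDist a B := infDist_le_infDist_of_subset hBY hBne
        _ ≤ hausdorffDist A B := infDist_le_hausdorffDist_of_mem ha hEd
    apply hausdorffDist_le_of_infDist hausdorffDist_nonneg
    · intro x hx
      calc infDist x C ≤ dist x (γ x) :=
            infDist_le_dist_of_mem (subset_closure ⟨x, hx, rfl⟩)
        _ ≤ hausdorffDist A B := hstep x hx
    · intro y hy
      have hclosed : IsClosed {z : Z | infDist z A ≤ hausdorffDist A B} :=
        isClosed_le (continuous_infDist_pt A) continuous_const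
      refine hclosed.closure_subset (closure_mono ?_ hy)
      rintro _ ⟨a, ha, rfl⟩
      calc infDist (γ a) A ≤ dist (γ a) a := infDist_le_dist_of_mem ha
        _ = dist a (γ a) := dist_comm _ _
        _ ≤ hausdorffDist A B := hstep a ha
  haveI : Nonempty {B : Set Z // B.Nonempty ∧ IsClosed B ∧ B ⊆ Y} :=
    ⟨⟨C, hCne, isClosed_closure, hCsub⟩⟩
  refine le_antisymm ?_ (le_ciInf key)
  have hbb : BddBelow (Set.range fun B : {B : Set Z // B.Nonempty ∧ IsClosed B ∧ B ⊆ Y} =>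
      hausdorffDist A (B : Set Z)) :=
    ⟨0, Set.forall_mem_range.2 fun B => hausdorffDist_nonneg⟩
  exact ciInf_le hbb ⟨C, hCne, isClosed_closure, hCsub⟩
end

section
/- Let X and Y be nonempty compact subsets of a metric space Z. Then the Hausdorff distance in the hyperspace of Z between the set of all nonempty compact subsets of X and the set of all nonempty compact subsets of Y equals the Hausdorff distance between X and Y in Z. -/
open Metric EMetric Set TopologicalSpace

/-- Auxiliary: for a nonempty compact `A ⊆ X`, there is a nonempty compact `B ⊆ Y`
with Hausdorff distance at most `hausdorffDist X Y`. -/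
lemma stmt_4_aux {Z : Type*} [MetricSpace Z] (X Y : Set Z)
    (hX : IsCompact X) (hY : IsCompact Y) (hXne : X.Nonempty) (hYne : Y.Nonempty)
    (A : NonemptyCompacts Z) (hA : (A : Set Z) ⊆ X) :
    ∃ B : NonemptyCompacts Z, (B : Set Z) ⊆ Y ∧
      hausdorffDist (A : Set Z) (B : Set Z) ≤ hausdorffDist X Y := by
  set r := hausdorffDist X Y with hr
  have hfinXY : hausdorffEdist X Y ≠ ⊤ :=
    hausdorffEdist_ne_top_of_nonempty_of_bounded hXne hYne hX.isBounded hY.isBounded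
  -- B := Y ∩ cthickening r A
  set Bs : Set Z := Y ∩ cthickening r (A : Set Z) with hBs
  have hBsub : Bs ⊆ Y := inter_subset_left
  have hBclosed : IsClosed Bs := hY.isClosed.inter isClosed_cthickening
  have hBcompact : IsCompact Bs := hY.of_isClosed_subset hBclosed hBsub
  -- nonemptiness: take a ∈ A, find y ∈ Y with dist a y ≤ r
  have key : ∀ a ∈ (A : Set Z), ∃ y ∈ Y, dist a y ≤ r := by
    intro a ha
    obtain ⟨y, hy, hyd⟩ := hY.exists_infDist_eq_dist hYne a
    refine ⟨y, hy, ?_⟩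
    rw [← hyd]
    exact infDist_le_hausdorffDist_of_mem (hA ha) hfinXY
  have hBne : Bs.Nonempty := by
    obtain ⟨a, ha⟩ := A.nonempty
    obtain ⟨y, hy, hyd⟩ := key a ha
    exact ⟨y, hy, mem_cthickening_of_dist_le y a r _ ha (by rwa [dist_comm])⟩
  refine ⟨⟨⟨Bs, hBcompact⟩, hBne⟩, hBsub, ?_⟩
  apply hausdorffDist_le_of_mem_dist hausdorffDist_nonneg
  · intro a ha
    obtain ⟨y, hy, hyd⟩ := key a ha
    exact ⟨y, ⟨hy, mem_cthickening_of_dist_le y a r _ ha (by rwa [dist_comm])⟩, hyd⟩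
  · intro b hb
    have hb' : infDist b (A : Set Z) ≤ r :=
      ENNReal.toReal_le_of_le_ofReal hausdorffDist_nonneg (mem_cthickening_iff.1 hb.2)
    obtain ⟨a, ha, had⟩ := A.isCompact.exists_infDist_eq_dist A.nonempty b
    refine ⟨a, ha, ?_⟩
    rw [← had]
    exact hb'

theorem stmt_4 {Z : Type*} [MetricSpace Z] (X Y : Set Z)
    (hX : IsCompact X) (hY : IsCompact Y) (hXne : X.Nonempty) (hYne : Y.Nonempty) :
    hausdorffDist {A : NonemptyCompacts Z | (A : Set Z) ⊆ X}
      {B : NonemptyCompacts Z | (B : Set Z) ⊆ Y} = hausdorffDist X Y := by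
  set r := hausdorffDist X Y with hr
  set 𝒜 : Set (NonemptyCompacts Z) := {A | (A : Set Z) ⊆ X} with h𝒜
  set ℬ : Set (NonemptyCompacts Z) := {B | (B : Set Z) ⊆ Y} with hℬ
  set X' : NonemptyCompacts Z := ⟨⟨X, hX⟩, hXne⟩ with hX'
  set Y' : NonemptyCompacts Z := ⟨⟨Y, hY⟩, hYne⟩ with hY'
  have hX'mem : X' ∈ 𝒜 := by show (X' : Set Z) ⊆ X; exact subset_rfl
  have hY'mem : Y' ∈ ℬ := by show (Y' : Set Z) ⊆ Y; exact subset_rfl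
  have h𝒜ne : 𝒜.Nonempty := ⟨X', hX'mem⟩
  have hℬne : ℬ.Nonempty := ⟨Y', hY'mem⟩
  have hfinXY : hausdorffEdist X Y ≠ ⊤ :=
    hausdorffEdist_ne_top_of_nonempty_of_bounded hXne hYne hX.isBounded hY.isBounded
  -- upper bound
  have hle : hausdorffDist 𝒜 ℬ ≤ r := by
    apply hausdorffDist_le_of_mem_dist hausdorffDist_nonneg
    · intro A hA
      obtain ⟨B, hB, hd⟩ := stmt_4_aux X Y hX hY hXne hYne A hA
      exact ⟨B, hB, by rwa [NonemptyCompacts.dist_eq]⟩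
    · intro B hB
      obtain ⟨A, hA, hd⟩ := stmt_4_aux Y X hY hX hYne hXne B hB
      refine ⟨A, hA, ?_⟩
      calc dist B A = hausdorffDist (B : Set Z) (A : Set Z) :=
              NonemptyCompacts.dist_eq
        _ ≤ hausdorffDist Y X := hd
        _ = r := hausdorffDist_comm
  -- boundedness of 𝒜 and ℬ, for finiteness of hausdorffEdist 𝒜 ℬ
  have hbdd : ∀ (W : Set Z) (hW : IsCompact W) (hWne : W.Nonempty)
      (W' : NonemptyCompacts Z) (hWeq : (W' : Set Z) = W),
      Bornology.IsBounded {A : NonemptyCompacts Z | (A : Set Z) ⊆ W} := by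
    intro W hW hWne W' hWeq
    apply (isBounded_iff_subset_closedBall W').2
    refine ⟨diam W, fun A hA => ?_⟩
    simp only [Metric.mem_closedBall, NonemptyCompacts.dist_eq, hWeq]
    exact hausdorffDist_le_diam A.nonempty (hW.isBounded.subset hA) hWne hW.isBounded |>.trans
      (diam_mono (union_subset hA subset_rfl) hW.isBounded)
  have hfin : hausdorffEdist 𝒜 ℬ ≠ ⊤ :=
    hausdorffEdist_ne_top_of_nonempty_of_bounded h𝒜ne hℬne
      (hbdd X hX hXne X' rfl) (hbdd Y hY hYne Y' rfl)
  -- lower bound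
  have hge : r ≤ hausdorffDist 𝒜 ℬ := by
    apply hausdorffDist_le_of_infDist hausdorffDist_nonneg
    · intro x hx
      have h1 : infDist X' ℬ ≤ hausdorffDist 𝒜 ℬ :=
        infDist_le_hausdorffDist_of_mem hX'mem hfin
      refine le_trans ?_ h1
      by_contra h
      push_neg at h
      obtain ⟨B, hB, hBd⟩ := (infDist_lt_iff hℬne).1 h
      rw [NonemptyCompacts.dist_eq] at hBd
      have hBd' : hausdorffDist X (B : Set Z) < infDist x Y := hBd
      have hfinXB : hausdorffEdist X (B : Set Z) ≠ ⊤ :=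
        hausdorffEdist_ne_top_of_nonempty_of_bounded hXne B.nonempty hX.isBounded
          B.isCompact.isBounded
      have : infDist x Y ≤ hausdorffDist X (B : Set Z) :=
        le_trans (infDist_le_infDist_of_subset hB B.nonempty)
          (infDist_le_hausdorffDist_of_mem hx hfinXB)
      linarith
    · intro y hy
      have h1 : infDist Y' 𝒜 ≤ hausdorffDist ℬ 𝒜 :=
        infDist_le_hausdorffDist_of_mem hY'mem (by rwa [hausdorffEdist_comm])
      rw [hausdorffDist_comm] at h1
      refine le_trans ?_ h1
      by_contra h
      push_neg at h
      obtain ⟨A, hA, hAd⟩ := (infDist_lt_iff h𝒜ne).1 h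
      rw [NonemptyCompacts.dist_eq] at hAd
      have hAd' : hausdorffDist Y (A : Set Z) < infDist y X := hAd
      have hfinYA : hausdorffEdist Y (A : Set Z) ≠ ⊤ :=
        hausdorffEdist_ne_top_of_nonempty_of_bounded hYne A.nonempty hY.isBounded
          A.isCompact.isBounded
      have : infDist y X ≤ hausdorffDist Y (A : Set Z) :=
        le_trans (infDist_le_infDist_of_subset hA A.nonempty)
          (infDist_le_hausdorffDist_of_mem hy hfinYA)
      linarith
  linarith
end

section
/- For any compact metric spaces X and Y, the Gromov–Hausdorff distance between the hyperspaces H(X) and H(Y) (sets of nonempty closed subsets with the Hausdorff metric) is at most the Gromov–Hausdorff distance between X and Y. -/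
open Metric Set TopologicalSpace GromovHausdorff

instance {α : Type*} [TopologicalSpace α] [Nonempty α] :
    Nonempty (NonemptyCompacts α) :=
  ⟨⟨⟨{Classical.arbitrary α}, isCompact_singleton⟩, Set.singleton_nonempty _⟩⟩

/-!
Put `X` and `Y` isometrically into a common space `Z` at Hausdorff distance `r = d_GH(X, Y)`.
Taking images embeds `H(X)` and `H(Y)` isometrically into `H(Z)`, as the compact sets lying in
the copy of `X`, resp. of `Y`. Given a compact `K` in the copy of `X`, the points of the copy
of `Y` within `r` of `K` form a compact set `L` with `d_H(K, L) ≤ r`, so the two copies of the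
hyperspaces are again at Hausdorff distance at most `r`.
-/

theorem Isometry.nonemptyCompactsMap {α β : Type*} [EMetricSpace α] [EMetricSpace β]
    {f : α → β} (hf : Isometry f) : Isometry (NonemptyCompacts.map f hf.continuous) :=
  fun _ _ => hausdorffEDist_image hf

section Hyperspace

variable {Z : Type*} [MetricSpace Z] {s t : Set Z}

theorem exists_nonemptyCompacts_subset_dist_le_hausdorffDist (ht : IsCompact t)
    (hst : hausdorffEDist s t ≠ ⊤) (K : NonemptyCompacts Z) (hK : (K : Set Z) ⊆ s) :
    ∃ L : NonemptyCompacts Z, (L : Set Z) ⊆ t ∧ dist K L ≤ hausdorffDist s t := by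
  set r := hausdorffDist s t
  let L : Set Z := t ∩ {z | infDist z K ≤ r}
  have hLt : L ⊆ t := inter_subset_left
  have hL : IsCompact L :=
    ht.inter_right (isClosed_le (continuous_infDist_pt _) continuous_const)
  have hnear : ∀ x ∈ (K : Set Z), ∃ y ∈ L, dist x y ≤ r := by
    intro x hx
    have htne : t.Nonempty := nonempty_of_hausdorffEDist_ne_top ⟨x, hK hx⟩ hst
    obtain ⟨y, hyt, hxy⟩ := ht.exists_infDist_eq_dist htne x
    have hxy_le : dist x y ≤ r := hxy ▸ infDist_le_hausdorffDist_of_mem (hK hx) hst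
    have hyK : infDist y K ≤ r := (infDist_le_dist_of_mem hx).trans (dist_comm y x ▸ hxy_le)
    exact ⟨y, ⟨hyt, hyK⟩, hxy_le⟩
  obtain ⟨y, hyL, -⟩ := hnear _ K.nonempty.some_mem
  refine ⟨⟨⟨L, hL⟩, ⟨y, hyL⟩⟩, hLt, ?_⟩
  rw [NonemptyCompacts.dist_eq]
  refine hausdorffDist_le_of_infDist hausdorffDist_nonneg (fun x hx => ?_) fun y hy => hy.2
  obtain ⟨y, hyL, hxy⟩ := hnear x hx
  exact (infDist_le_dist_of_mem hyL).trans hxy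

theorem hausdorffDist_nonemptyCompacts_subset_le (hs : IsCompact s) (ht : IsCompact t)
    (hst : hausdorffEDist s t ≠ ⊤) :
    hausdorffDist {K : NonemptyCompacts Z | ↑K ⊆ s} {L : NonemptyCompacts Z | ↑L ⊆ t} ≤
      hausdorffDist s t := by
  refine hausdorffDist_le_of_mem_dist hausdorffDist_nonneg
    (fun K hK => exists_nonemptyCompacts_subset_dist_le_hausdorffDist ht hst K hK)
    (fun L hL => ?_)
  rw [hausdorffEDist_comm] at hst
  obtain ⟨K, hKs, hLK⟩ := exists_nonemptyCompacts_subset_dist_le_hausdorffDist hs hst L hL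
  exact ⟨K, hKs, hLK.trans_eq hausdorffDist_comm⟩

end Hyperspace

theorem stmt_5 (X : Type*) (Y : Type*) [MetricSpace X] [CompactSpace X] [Nonempty X]
    [MetricSpace Y] [CompactSpace Y] [Nonempty Y] :
    ghDist (NonemptyCompacts X) (NonemptyCompacts Y) ≤ ghDist X Y := by
  have hΦ := isometry_optimalGHInjl X Y
  have hΨ := isometry_optimalGHInjr X Y
  have hΦX : IsCompact (range (optimalGHInjl X Y)) := isCompact_range hΦ.continuous
  have hΨY : IsCompact (range (optimalGHInjr X Y)) := isCompact_range hΨ.continuous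
  have hfin := hausdorffEDist_ne_top_of_nonempty_of_bounded (range_nonempty _)
    (range_nonempty _) hΦX.isBounded hΨY.isBounded
  calc ghDist (NonemptyCompacts X) (NonemptyCompacts Y)
      ≤ hausdorffDist (range (NonemptyCompacts.map _ hΦ.continuous))
          (range (NonemptyCompacts.map _ hΨ.continuous)) :=
        ghDist_le_hausdorffDist hΦ.nonemptyCompactsMap hΨ.nonemptyCompactsMap
    _ ≤ hausdorffDist (range (optimalGHInjl X Y)) (range (optimalGHInjr X Y)) := by
        rw [NonemptyCompacts.range_map hΦ.isEmbedding.isInducing,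
          NonemptyCompacts.range_map hΨ.isEmbedding.isInducing]
        exact hausdorffDist_nonemptyCompacts_subset_le hΦX hΨY hfin
    _ = ghDist X Y := hausdorffDist_optimal
end

section
/- For any compact metric space X, the infimum of nonzero distances in the hyperspace H(X) equals the infimum of nonzero distances in X; that is, inf{d_H(A,B) : A, B ∈ H(X), A ≠ B} = inf{d(x,y) : x, y ∈ X, x ≠ y}. -/
open Metric Set TopologicalSpace EMetric

lemma hd_singleton {X : Type*} [MetricSpace X] (x y : X) :
    hausdorffDist ({x} : Set X) {y} = dist x y := by
  apply le_antisymm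
  · apply hausdorffDist_le_of_mem_dist dist_nonneg
    · rintro z hz; rw [mem_singleton_iff] at hz; rw [hz]
      exact ⟨y, rfl, le_refl _⟩
    · rintro z hz; rw [mem_singleton_iff] at hz; rw [hz]
      exact ⟨x, rfl, dist_comm x y ▸ le_refl _⟩
  · have := infDist_le_hausdorffDist_of_mem (mem_singleton x)
      (hausdorffEdist_ne_top_of_nonempty_of_bounded (singleton_nonempty x)
        (singleton_nonempty y) Bornology.isBounded_singleton Bornology.isBounded_singleton)
    rwa [infDist_singleton] at this

theorem stmt_7 (X : Type*) [MetricSpace X] [CompactSpace X] :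
    sInf {d : ℝ | ∃ A B : NonemptyCompacts X, A ≠ B ∧ d = dist A B}
      = sInf {d : ℝ | ∃ x y : X, x ≠ y ∧ d = dist x y} := by
  have hbdd : BddBelow {d : ℝ | ∃ x y : X, x ≠ y ∧ d = dist x y} := by
    refine ⟨0, ?_⟩; rintro d ⟨x, y, _, rfl⟩; exact dist_nonneg
  have hbdd' : BddBelow {d : ℝ | ∃ A B : NonemptyCompacts X, A ≠ B ∧ d = dist A B} := by
    refine ⟨0, ?_⟩; rintro d ⟨A, B, _, rfl⟩; exact dist_nonneg
  by_cases hX : ∃ x y : X, x ≠ y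
  · obtain ⟨x0, y0, hxy0⟩ := hX
    apply le_antisymm
    · apply csInf_le_csInf hbdd' (⟨dist x0 y0, x0, y0, hxy0, rfl⟩ : Set.Nonempty {d : ℝ | ∃ x y : X, x ≠ y ∧ d = dist x y})
      rintro d ⟨x, y, hxy, rfl⟩
      refine ⟨⟨⟨{x}, isCompact_singleton⟩, singleton_nonempty x⟩,
        ⟨⟨{y}, isCompact_singleton⟩, singleton_nonempty y⟩, ?_, ?_⟩
      · simp only [ne_eq, NonemptyCompacts.ext_iff, Compacts.ext_iff]
        simpa using hxy
      · rw [NonemptyCompacts.dist_eq]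
        exact (hd_singleton x y).symm
    · refine le_csInf ⟨dist
        (⟨⟨{x0}, isCompact_singleton⟩, singleton_nonempty x0⟩ : NonemptyCompacts X)
        (⟨⟨{y0}, isCompact_singleton⟩, singleton_nonempty y0⟩ : NonemptyCompacts X),
        _, _, by simp only [ne_eq, NonemptyCompacts.ext_iff, Compacts.ext_iff]; simpa using hxy0, rfl⟩ ?_
      rintro d ⟨A, B, hAB, rfl⟩
      have hfin : hausdorffEdist (A : Set X) B ≠ ⊤ :=
        hausdorffEdist_ne_top_of_nonempty_of_bounded A.nonempty B.nonempty
          A.isCompact.isBounded B.isCompact.isBounded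
      have hne : (A : Set X) ≠ B := fun h => hAB (NonemptyCompacts.ext h)
      have : (∃ x ∈ (A : Set X), x ∉ (B : Set X)) ∨ ∃ x ∈ (B : Set X), x ∉ (A : Set X) := by
        by_contra h
        push_neg at h
        exact hne (Set.Subset.antisymm h.1 h.2)
      rcases this with ⟨x, hxA, hxB⟩ | ⟨x, hxB, hxA⟩
      · obtain ⟨y, hyB, hy⟩ := B.isCompact.exists_infDist_eq_dist B.nonempty x
        have h1 : dist x y ≤ dist A B := by
          rw [← hy, NonemptyCompacts.dist_eq]
          exact infDist_le_hausdorffDist_of_mem hxA hfin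
        exact le_trans (csInf_le hbdd ⟨x, y, fun h => hxB (h ▸ hyB), rfl⟩) h1
      · obtain ⟨y, hyA, hy⟩ := A.isCompact.exists_infDist_eq_dist A.nonempty x
        have h1 : dist x y ≤ dist A B := by
          rw [← hy, NonemptyCompacts.dist_eq, hausdorffDist_comm]
          exact infDist_le_hausdorffDist_of_mem hxB (by rwa [hausdorffEdist_comm])
        exact le_trans (csInf_le hbdd ⟨x, y, fun h => hxA (h ▸ hyA), rfl⟩) h1
  · push_neg at hX
    have h1 : {d : ℝ | ∃ x y : X, x ≠ y ∧ d = dist x y} = ∅ := by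
      ext d; simp only [mem_setOf_eq, mem_empty_iff_false, iff_false]
      rintro ⟨x, y, hxy, _⟩; exact hxy (hX x y)
    have h2 : {d : ℝ | ∃ A B : NonemptyCompacts X, A ≠ B ∧ d = dist A B} = ∅ := by
      ext d; simp only [mem_setOf_eq, mem_empty_iff_false, iff_false]
      rintro ⟨A, B, hAB, _⟩
      apply hAB
      apply NonemptyCompacts.ext
      ext z
      obtain ⟨a, ha⟩ := A.nonempty
      obtain ⟨b, hb⟩ := B.nonempty
      constructor <;> intro h
      · rwa [hX z b]
      · rwa [hX z a]
    rw [h1, h2]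
end

section
/- The Hausdorff mapping preserves Gromov–Hausdorff distances between finite simplices: for positive integers p, q and reals t, s > 0, d_GH(H(t·Δ_p), H(s·Δ_q)) = d_GH(t·Δ_p, s·Δ_q). -/
/-!
The hyperspace of a simplex `t·Δ_p` is again a simplex, with the same diameter and `2 ^ p - 1`
vertices. The Gromov–Hausdorff distance between two finite simplices of diameters `a` and `b`
depends only on how their numbers of vertices compare: it is `|a - b| / 2` when they are equal and
`max a (b - a) / 2` when the first one is larger. The upper bounds come from a surjection between
the vertex sets, whose distortion is at least twice the distance; the lower bounds from a map of
distortion at most twice the distance read off an optimal coupling, which has to identify two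
vertices when the target is smaller. As `p ↦ 2 ^ p - 1` is strictly monotone, the comparison, and
hence the distance, is the same for the hyperspaces.
-/

open Metric Set TopologicalSpace GromovHausdorff

namespace GromovHausdorff

variable {X Y : Type*} [MetricSpace X] [CompactSpace X] [Nonempty X]
  [MetricSpace Y] [CompactSpace Y] [Nonempty Y]

theorem ghDist_comm : ghDist X Y = ghDist Y X :=
  dist_comm _ _

theorem ghDist_le_of_surjective {f : X → Y} (hf : Function.Surjective f) {ε : ℝ}
    (H : ∀ x x', |dist x x' - dist (f x) (f x')| ≤ ε) : ghDist X Y ≤ ε / 2 := by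
  have := ghDist_le_of_approx_subsets (s := univ) (fun x => f x) (ε₁ := 0) (ε₃ := 0)
    (fun x => ⟨x, mem_univ x, (dist_self x).le⟩)
    (fun y => ⟨⟨(hf y).choose, mem_univ _⟩, by rw [(hf y).choose_spec, dist_self]⟩)
    (fun x x' => H x x')
  linarith

theorem exists_dist_optimalGHInjl_optimalGHInjr_le (x : X) :
    ∃ y : Y, dist (optimalGHInjl X Y x) (optimalGHInjr X Y y) ≤ ghDist X Y := by
  have hcompact : IsCompact (range (optimalGHInjr X Y)) :=
    isCompact_range (isometry_optimalGHInjr X Y).continuous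
  have hfinite : hausdorffEDist (range (optimalGHInjl X Y)) (range (optimalGHInjr X Y)) ≠ ⊤ :=
    hausdorffEDist_ne_top_of_nonempty_of_bounded (range_nonempty _) (range_nonempty _)
      (isCompact_range (isometry_optimalGHInjl X Y).continuous).isBounded hcompact.isBounded
  obtain ⟨_, ⟨y, rfl⟩, hy⟩ := hcompact.exists_infDist_eq_dist (range_nonempty _)
    (optimalGHInjl X Y x)
  refine ⟨y, ?_⟩
  rw [← hy, ← hausdorffDist_optimal]
  exact infDist_le_hausdorffDist_of_mem (mem_range_self x) hfinite

theorem exists_abs_dist_sub_le_two_mul_ghDist :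
    ∃ f : X → Y, ∀ x x', |dist x x' - dist (f x) (f x')| ≤ 2 * ghDist X Y := by
  choose f hf using exists_dist_optimalGHInjl_optimalGHInjr_le (X := X) (Y := Y)
  refine ⟨f, fun x x' => ?_⟩
  rw [← (isometry_optimalGHInjl X Y).dist_eq, ← (isometry_optimalGHInjr X Y).dist_eq]
  calc |dist (optimalGHInjl X Y x) (optimalGHInjl X Y x') -
        dist (optimalGHInjr X Y (f x)) (optimalGHInjr X Y (f x'))|
      ≤ dist (optimalGHInjl X Y x) (optimalGHInjr X Y (f x)) +
        dist (optimalGHInjl X Y x') (optimalGHInjr X Y (f x')) := dist_dist_dist_le _ _ _ _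
    _ ≤ 2 * ghDist X Y := by linarith [hf x, hf x']

theorem diam_univ_le_diam_univ_add_two_mul_ghDist :
    diam (univ : Set Y) ≤ diam (univ : Set X) + 2 * ghDist X Y := by
  obtain ⟨f, hf⟩ := exists_abs_dist_sub_le_two_mul_ghDist (X := Y) (Y := X)
  rw [ghDist_comm] at hf
  have hnonneg : 0 ≤ diam (univ : Set X) + 2 * ghDist X Y :=
    add_nonneg diam_nonneg (mul_nonneg zero_le_two dist_nonneg)
  refine diam_le_of_forall_dist_le hnonneg fun y _ y' _ => ?_
  have := dist_le_diam_of_mem isCompact_univ.isBounded (mem_univ (f y)) (mem_univ (f y'))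
  linarith [(abs_le.1 (hf y y')).2]

theorem abs_diam_univ_sub_diam_univ_le_two_mul_ghDist :
    |diam (univ : Set X) - diam (univ : Set Y)| ≤ 2 * ghDist X Y := by
  have h₁ := diam_univ_le_diam_univ_add_two_mul_ghDist (X := X) (Y := Y)
  have h₂ := diam_univ_le_diam_univ_add_two_mul_ghDist (X := Y) (Y := X)
  rw [ghDist_comm] at h₂
  exact abs_sub_le_iff.2 ⟨by linarith, by linarith⟩

theorem exists_ne_dist_le_two_mul_ghDist [Finite Y] (h : Nat.card Y < Nat.card X) :
    ∃ x x' : X, x ≠ x' ∧ dist x x' ≤ 2 * ghDist X Y := by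
  obtain ⟨f, hf⟩ := exists_abs_dist_sub_le_two_mul_ghDist (X := X) (Y := Y)
  obtain ⟨x, x', heq, hne⟩ := Function.not_injective_iff.1
    fun hinj => h.not_ge (Nat.card_le_card_of_injective f hinj)
  refine ⟨x, x', hne, ?_⟩
  simpa [heq] using (abs_le.1 (hf x x')).2

end GromovHausdorff

/-- The simplex `t·Δ_n` with `t = diam X`; this normalizes the arbitrary edge length of a one-point
space to `0`. -/
def IsEquilateral (X : Type*) [PseudoMetricSpace X] : Prop :=
  ∀ x y : X, x ≠ y → dist x y = diam (univ : Set X)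

theorem isEquilateral_of_forall_ne_dist_eq {X : Type*} [PseudoMetricSpace X] {t : ℝ}
    (h : ∀ x y : X, x ≠ y → dist x y = t) : IsEquilateral X := by
  intro x y hxy
  have hle : ∀ a b : X, dist a b ≤ t := fun a b => by
    rcases eq_or_ne a b with rfl | hab
    · rw [dist_self, ← h x y hxy]; exact dist_nonneg
    · exact (h a b hab).le
  have hbdd : Bornology.IsBounded (univ : Set X) := isBounded_iff.2 ⟨t, fun a _ b _ => hle a b⟩
  rw [h x y hxy]
  refine le_antisymm ?_ (diam_le_of_forall_dist_le (h x y hxy ▸ dist_nonneg) fun a _ b _ => hle a b)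
  simpa only [h x y hxy] using dist_le_diam_of_mem hbdd (mem_univ x) (mem_univ y)

theorem IsEquilateral.dist_le {X : Type*} [PseudoMetricSpace X] (h : IsEquilateral X) (x y : X) :
    dist x y ≤ diam (univ : Set X) := by
  rcases eq_or_ne x y with rfl | hxy
  · rw [dist_self]; exact diam_nonneg
  · exact (h x y hxy).le

namespace TopologicalSpace.NonemptyCompacts

variable {α : Type*}

instance [TopologicalSpace α] [Finite α] : Finite (NonemptyCompacts α) :=
  Finite.of_injective _ SetLike.coe_injective

theorem natCard_eq [TopologicalSpace α] [Finite α] :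
    Nat.card (NonemptyCompacts α) = 2 ^ Nat.card α - 1 := by
  classical
  have : Fintype α := Fintype.ofFinite α
  let e : NonemptyCompacts α ≃ {s : Set α // s ≠ ∅} :=
    { toFun := fun A => ⟨A, A.nonempty.ne_empty⟩
      invFun := fun s => ⟨⟨s, s.1.toFinite.isCompact⟩, nonempty_iff_ne_empty.2 s.2⟩
      left_inv := fun _ => rfl
      right_inv := fun _ => rfl }
  rw [Nat.card_congr e, Nat.card_eq_fintype_card, Nat.card_eq_fintype_card,
    Fintype.card_subtype_compl, Fintype.card_subtype_eq, Fintype.card_set]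

theorem natCard_lt_natCard {β : Type*} [TopologicalSpace α] [TopologicalSpace β] [Finite α]
    [Finite β] (h : Nat.card α < Nat.card β) :
    Nat.card (NonemptyCompacts α) < Nat.card (NonemptyCompacts β) := by
  rw [natCard_eq, natCard_eq]
  have := Nat.pow_lt_pow_right one_lt_two h
  have := Nat.one_le_two_pow (n := Nat.card α)
  omega

theorem diam_univ [MetricSpace α] [CompactSpace α] :
    diam (univ : Set (NonemptyCompacts α)) = diam (univ : Set α) := by
  refine le_antisymm (diam_le_of_forall_dist_le diam_nonneg fun A _ B _ => ?_) ?_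
  · rw [NonemptyCompacts.dist_eq]
    exact (hausdorffDist_le_diam A.nonempty A.isCompact.isBounded B.nonempty
      B.isCompact.isBounded).trans (diam_mono (subset_univ _) isCompact_univ.isBounded)
  · rw [← isometry_singleton.diam_range]
    exact diam_mono (subset_univ _) isCompact_univ.isBounded

end TopologicalSpace.NonemptyCompacts

namespace IsEquilateral

variable {α : Type*} [MetricSpace α]

theorem dist_nonemptyCompacts (h : IsEquilateral α) {A B : NonemptyCompacts α} (hAB : A ≠ B) :
    dist A B = diam (univ : Set α) := by
  have hfar : ∀ A B : NonemptyCompacts α, ¬ (A : Set α) ⊆ B → diam (univ : Set α) ≤ dist A B := by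
    intro A B hAB
    obtain ⟨x, hxA, hxB⟩ := not_subset.1 hAB
    obtain ⟨y, hyB, hy⟩ := B.isCompact.exists_infDist_eq_dist B.nonempty x
    rw [NonemptyCompacts.dist_eq, ← h x y fun hxy => hxB (hxy ▸ hyB), ← hy]
    exact infDist_le_hausdorffDist_of_mem hxA (hausdorffEDist_ne_top_of_nonempty_of_bounded
      A.nonempty B.nonempty A.isCompact.isBounded B.isCompact.isBounded)
  refine le_antisymm ?_ ?_
  · rw [NonemptyCompacts.dist_eq]
    exact hausdorffDist_le_of_mem_dist diam_nonneg
      (fun x _ => ⟨_, B.nonempty.some_mem, h.dist_le _ _⟩)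
      (fun x _ => ⟨_, A.nonempty.some_mem, h.dist_le _ _⟩)
  · by_cases hsub : (A : Set α) ⊆ B
    · exact dist_comm A B ▸ hfar B A fun h' => hAB (NonemptyCompacts.ext (hsub.antisymm h'))
    · exact hfar A B hsub

theorem nonemptyCompacts (h : IsEquilateral α) : IsEquilateral (NonemptyCompacts α) :=
  isEquilateral_of_forall_ne_dist_eq fun _ _ => h.dist_nonemptyCompacts

end IsEquilateral

namespace GromovHausdorff

variable {X Y : Type*} [MetricSpace X] [Finite X] [Nonempty X]
  [MetricSpace Y] [Finite Y] [Nonempty Y]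

theorem ghDist_eq_of_card_eq (hX : IsEquilateral X) (hY : IsEquilateral Y)
    (h : Nat.card X = Nat.card Y) :
    ghDist X Y = |diam (univ : Set X) - diam (univ : Set Y)| / 2 := by
  obtain ⟨e⟩ := Finite.card_eq.1 h
  refine le_antisymm (ghDist_le_of_surjective e.surjective fun x x' => ?_) ?_
  · rcases eq_or_ne x x' with rfl | hne
    · simp
    · rw [hX x x' hne, hY _ _ (e.injective.ne hne)]
  · linarith [abs_diam_univ_sub_diam_univ_le_two_mul_ghDist (X := X) (Y := Y)]

theorem ghDist_eq_of_card_lt (hX : IsEquilateral X) (hY : IsEquilateral Y)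
    (h : Nat.card Y < Nat.card X) :
    ghDist X Y = max (diam (univ : Set X)) (diam (univ : Set Y) - diam (univ : Set X)) / 2 := by
  have : Fintype X := Fintype.ofFinite X
  have : Fintype Y := Fintype.ofFinite Y
  obtain ⟨i⟩ := Function.Embedding.nonempty_of_card_le (α := Y) (β := X)
    (by simpa only [Nat.card_eq_fintype_card] using h.le)
  obtain ⟨g, hg⟩ : ∃ g : X → Y, Function.Surjective g := ⟨_, Function.invFun_surjective i.injective⟩
  have hdiam := diam_univ_le_diam_univ_add_two_mul_ghDist (X := X) (Y := Y)
  set a := diam (univ : Set X)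
  set b := diam (univ : Set Y)
  have ha : 0 ≤ a := diam_nonneg
  have hb : 0 ≤ b := diam_nonneg
  refine le_antisymm (ghDist_le_of_surjective hg fun x x' => ?_) ?_
  · rcases eq_or_ne x x' with rfl | hne
    · simp only [dist_self, sub_self, abs_zero]
      exact le_max_of_le_left ha
    rcases eq_or_ne (g x) (g x') with heq | hne'
    · rw [heq, dist_self, hX x x' hne, sub_zero, abs_of_nonneg diam_nonneg]
      exact le_max_left _ _
    · rw [hX x x' hne, hY _ _ hne']
      exact abs_le.2 ⟨by linarith [le_max_right a (b - a)], by linarith [le_max_left a (b - a)]⟩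
  · obtain ⟨x, x', hne, hle⟩ := exists_ne_dist_le_two_mul_ghDist (X := X) (Y := Y) h
    rw [hX x x' hne] at hle
    rw [div_le_iff₀ two_pos]
    exact max_le (by linarith) (by linarith)

end GromovHausdorff

theorem stmt_11_general (t s : ℝ)
    (P Q : Type*) [MetricSpace P] [Finite P] [Nonempty P]
    [MetricSpace Q] [Finite Q] [Nonempty Q]
    (hPdist : ∀ x y : P, x ≠ y → dist x y = t)
    (hQdist : ∀ x y : Q, x ≠ y → dist x y = s) :
    ghDist (NonemptyCompacts P) (NonemptyCompacts Q) = ghDist P Q := by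
  have hP := isEquilateral_of_forall_ne_dist_eq hPdist
  have hQ := isEquilateral_of_forall_ne_dist_eq hQdist
  rcases lt_trichotomy (Nat.card P) (Nat.card Q) with h | h | h
  · rw [ghDist_comm, ghDist_comm (X := P), ghDist_eq_of_card_lt hQ.nonemptyCompacts
        hP.nonemptyCompacts (NonemptyCompacts.natCard_lt_natCard h),
      ghDist_eq_of_card_lt hQ hP h, NonemptyCompacts.diam_univ, NonemptyCompacts.diam_univ]
  · rw [ghDist_eq_of_card_eq hP.nonemptyCompacts hQ.nonemptyCompacts
        (by rw [NonemptyCompacts.natCard_eq, NonemptyCompacts.natCard_eq, h]),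
      ghDist_eq_of_card_eq hP hQ h, NonemptyCompacts.diam_univ, NonemptyCompacts.diam_univ]
  · rw [ghDist_eq_of_card_lt hP.nonemptyCompacts hQ.nonemptyCompacts
        (NonemptyCompacts.natCard_lt_natCard h),
      ghDist_eq_of_card_lt hP hQ h, NonemptyCompacts.diam_univ, NonemptyCompacts.diam_univ]

theorem stmt_11 (p q : ℕ) (hp : 0 < p) (hq : 0 < q) (t s : ℝ) (ht : 0 < t) (hs : 0 < s)
    (P Q : Type*) [MetricSpace P] [Finite P] [Nonempty P]
    [MetricSpace Q] [Finite Q] [Nonempty Q]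
    (hPcard : Nat.card P = p) (hPdist : ∀ x y : P, x ≠ y → dist x y = t)
    (hQcard : Nat.card Q = q) (hQdist : ∀ x y : Q, x ≠ y → dist x y = s) :
    ghDist (NonemptyCompacts P) (NonemptyCompacts Q) = ghDist P Q :=
  stmt_11_general t s P Q hPdist hQdist
end

section
/- Let X be a nonempty connected metric space and t a real number with t ≥ diam X, t > 0. Then for any integer p ≥ 2, the Gromov–Hausdorff distance between the simplex t·Δ_p and X equals t/2. -/
open Metric Set

noncomputable def sDist {S X : Type*} [MetricSpace S] [MetricSpace X] (t : ℝ) :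
    S ⊕ X → S ⊕ X → ℝ
  | .inl a, .inl b => dist a b
  | .inr a, .inr b => dist a b
  | _, _ => t / 2

noncomputable def sumMetric {S X : Type*} [MetricSpace S] [MetricSpace X] (t : ℝ)
    (ht : 0 < t) (hS : ∀ a b : S, dist a b ≤ t) (hX : ∀ a b : X, dist a b ≤ t) :
    MetricSpace (S ⊕ X) where
  dist := sDist t
  dist_self := by rintro (a|a) <;> simp [sDist]
  dist_comm := by rintro (a|a) (b|b) <;> simp [sDist, dist_comm]
  dist_triangle := by
    rintro (a|a) (b|b) (c|c) <;>
      simp only [sDist] <;>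
      [exact dist_triangle a b c;
       (have := dist_nonneg (x := a) (y := b); linarith);
       (have := hS a c; linarith);
       (have := dist_nonneg (x := b) (y := c); linarith);
       (have := dist_nonneg (x := b) (y := c); linarith);
       (have := hX a c; linarith);
       (have := dist_nonneg (x := a) (y := b); linarith);
       exact dist_triangle a b c]
  eq_of_dist_eq_zero := by
    rintro (a|a) (b|b) h <;> simp only [sDist] at h
    · exact congrArg Sum.inl (eq_of_dist_eq_zero h)
    · linarith
    · linarith
    · exact congrArg Sum.inr (eq_of_dist_eq_zero h)

theorem gh_upper {S : Type u} {X : Type v} [MetricSpace S] [MetricSpace X]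
    [Nonempty S] [Nonempty X] (t : ℝ) (ht : 0 < t)
    (hS : ∀ a b : S, dist a b ≤ t) (hX : ∀ a b : X, dist a b ≤ t) :
    ∃ (Z : Type (max u v)) (mZ : MetricSpace Z) (f : S → Z) (g : X → Z),
      @Isometry S Z _ mZ.toPseudoEMetricSpace f ∧
      @Isometry X Z _ mZ.toPseudoEMetricSpace g ∧
      @Metric.hausdorffDist Z mZ.toPseudoMetricSpace (Set.range f) (Set.range g) ≤ t / 2 := by
  letI mZ := sumMetric t ht hS hX
  refine ⟨S ⊕ X, mZ, Sum.inl, Sum.inr, ?_, ?_, ?_⟩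
  · exact Isometry.of_dist_eq fun a b => rfl
  · exact Isometry.of_dist_eq fun a b => rfl
  · refine hausdorffDist_le_of_mem_dist (by linarith) ?_ ?_
    · rintro z ⟨s, rfl⟩
      obtain ⟨x⟩ := (inferInstance : Nonempty X)
      exact ⟨Sum.inr x, mem_range_self x, le_of_eq rfl⟩
    · rintro z ⟨x, rfl⟩
      obtain ⟨s⟩ := (inferInstance : Nonempty S)
      exact ⟨Sum.inl s, mem_range_self s, le_of_eq rfl⟩

theorem gh_lower {S : Type u} {X : Type v} [MetricSpace S] [MetricSpace X]
    [Nonempty X] [ConnectedSpace X] [Nontrivial S] (t : ℝ) (ht : 0 < t)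
    (hSdist : ∀ x y : S, x ≠ y → dist x y = t)
    (hS : ∀ a b : S, dist a b ≤ t) (hX : ∀ a b : X, dist a b ≤ t)
    (r : ℝ) {Z : Type w} [MetricSpace Z] (f : S → Z) (g : X → Z)
    (hf : Isometry f) (hg : Isometry g)
    (hH : Metric.hausdorffDist (Set.range f) (Set.range g) ≤ r) : t / 2 ≤ r := by
  by_contra hlt
  push_neg at hlt
  have hfn : (range f).Nonempty := range_nonempty f
  have hgn : (range g).Nonempty := range_nonempty g
  have hfb : Bornology.IsBounded (range f) := by
    rw [Metric.isBounded_range_iff]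
    exact ⟨t, fun a b => by rw [hf.dist_eq]; exact hS a b⟩
  have hgb : Bornology.IsBounded (range g) := by
    rw [Metric.isBounded_range_iff]
    exact ⟨t, fun a b => by rw [hg.dist_eq]; exact hX a b⟩
  have hne : EMetric.hausdorffEdist (range f) (range g) ≠ ⊤ :=
    hausdorffEdist_ne_top_of_nonempty_of_bounded hfn hgn hfb hgb
  set U : S → Set X := fun s => {x | dist (g x) (f s) < t / 2} with hU
  have hcover : ∀ x : X, ∃ s : S, x ∈ U s := by
    intro x
    have h1 : infDist (g x) (range f) ≤ r := by
      refine le_trans (infDist_le_hausdorffDist_of_mem (mem_range_self x) ?_) ?_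
      · rwa [EMetric.hausdorffEdist_comm]
      · rwa [hausdorffDist_comm]
    obtain ⟨y, ⟨s, rfl⟩, hy⟩ := (infDist_lt_iff hfn).mp (lt_of_le_of_lt h1 hlt)
    exact ⟨s, hy⟩
  have hdisj : ∀ s s' : S, s ≠ s' → ∀ x, x ∈ U s → x ∉ U s' := by
    intro s s' hss x hx hx'
    have h1 : dist (f s) (f s') ≤ dist (f s) (g x) + dist (g x) (f s') := dist_triangle _ _ _
    rw [hf.dist_eq, hSdist s s' hss] at h1
    simp only [hU, mem_setOf_eq] at hx hx'
    rw [dist_comm] at hx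
    linarith
  have hopen : ∀ s : S, IsOpen (U s) :=
    fun s => isOpen_lt (hg.continuous.dist continuous_const) continuous_const
  have hclosed : ∀ s : S, IsClosed (U s) := by
    intro s
    rw [← isOpen_compl_iff]
    have : (U s)ᶜ = ⋃ (s' : S) (_ : s' ≠ s), U s' := by
      ext x
      simp only [mem_compl_iff, mem_iUnion]
      constructor
      · intro hx
        obtain ⟨s', hs'⟩ := hcover x
        exact ⟨s', fun h => hx (h ▸ hs'), hs'⟩
      · rintro ⟨s', hne', hx⟩
        exact hdisj s' s hne' x hx
    rw [this]
    exact isOpen_iUnion fun s' => isOpen_iUnion fun _ => hopen s'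
  have hsurj : ∀ s : S, (U s).Nonempty := by
    intro s
    have h1 : infDist (f s) (range g) ≤ r :=
      le_trans (infDist_le_hausdorffDist_of_mem (mem_range_self s) hne) hH
    obtain ⟨y, ⟨x, rfl⟩, hy⟩ := (infDist_lt_iff hgn).mp (lt_of_le_of_lt h1 hlt)
    exact ⟨x, by simpa [hU, dist_comm] using hy⟩
  obtain ⟨s1, s2, h12⟩ := exists_pair_ne S
  have hcl : IsClopen (U s1) := ⟨hclosed s1, hopen s1⟩
  have h1univ : U s1 = univ := hcl.eq_univ (hsurj s1)
  obtain ⟨x, hx⟩ := hsurj s2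
  exact hdisj s2 s1 h12.symm x hx (h1univ ▸ mem_univ x)

/-- The Gromov–Hausdorff distance between two (not necessarily compact) metric spaces:
the infimum of real numbers `r` for which there is a realization of the pair in a common
metric space with Hausdorff distance at most `r` between the images. -/
noncomputable def ghDist' (X : Type u) (Y : Type v) [MetricSpace X] [MetricSpace Y] : ℝ :=
  sInf {r : ℝ | ∃ (Z : Type (max u v)) (mZ : MetricSpace Z) (f : X → Z) (g : Y → Z),
    @Isometry X Z _ mZ.toPseudoEMetricSpace f ∧
    @Isometry Y Z _ mZ.toPseudoEMetricSpace g ∧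
    @Metric.hausdorffDist Z mZ.toPseudoMetricSpace (Set.range f) (Set.range g) ≤ r}

theorem stmt_16 (X : Type*) [MetricSpace X] [Nonempty X] [ConnectedSpace X]
    (t : ℝ) (ht : 0 < t) (hdiam : EMetric.diam (Set.univ : Set X) ≤ ENNReal.ofReal t)
    (p : ℕ) (hp : 2 ≤ p) (S : Type*) [MetricSpace S]
    (hScard : Nat.card S = p) (hSdist : ∀ x y : S, x ≠ y → dist x y = t) :
    ghDist' S X = t / 2 := by
  have hSnontriv : Nontrivial S := by
    have hf : Finite S := Nat.finite_of_card_ne_zero (by omega)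
    exact Finite.one_lt_card_iff_nontrivial.mp
      (by simpa [Nat.card_eq_fintype_card] using (show 1 < Nat.card S by omega))
  have hSne : Nonempty S := inferInstance
  have hXd : ∀ a b : X, dist a b ≤ t := by
    intro a b
    have h := (EMetric.edist_le_diam_of_mem (mem_univ a) (mem_univ b)).trans hdiam
    rw [edist_dist] at h
    exact (ENNReal.ofReal_le_ofReal_iff ht.le).mp h
  have hSd : ∀ a b : S, dist a b ≤ t := by
    intro a b
    by_cases h : a = b
    · simp [h, ht.le]
    · rw [hSdist a b h]
  unfold ghDist'
  refine le_antisymm (csInf_le ⟨t / 2, ?_⟩ (gh_upper t ht hSd hXd))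
    (le_csInf ⟨t / 2, gh_upper t ht hSd hXd⟩ ?_) <;>
  · rintro r ⟨Z, mZ, f, g, hf, hg, hH⟩
    exact gh_lower t ht hSdist hSd hXd r f g hf hg hH
end

section
/- Let X be a nonempty continuum (connected compact metric space), t ≥ diam X with t > 0, and p ≥ 2 an integer. Then d_GH(H(t·Δ_p), H(X)) = d_GH(t·Δ_p, X) = t/2. -/
open Metric Set TopologicalSpace GromovHausdorff

open Function

/-!
Both equalities are instances of one fact: if `A` has two points, distinct points of `A` are at
least `t` apart, `B` is connected, and both have diameter at most `t`, then `d_GH(A, B) = t / 2`.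
Making all cross distances equal to `t / 2` on `A ⊕ B` gives `≤`. Conversely, if `A` and `B` were
at Hausdorff distance `< t / 2` inside a common space, the preimages in `B` of the `t / 2`-balls
around the points of `A` would split `B` into at least two disjoint nonempty open sets.

The hyperspaces satisfy the same hypotheses: `H(S)` is again `t`-equilateral, and `H(X)` is
connected because finite sets are dense in it and `y ↦ K ∪ {y}` is a continuous image of `X`
containing both `K` and `K ∪ {y}`.
-/

theorem PreconnectedSpace.subsingleton_of_disjoint_isOpen_cover {α ι : Type*}
    [TopologicalSpace α] [PreconnectedSpace α] {U : ι → Set α} (hopen : ∀ i, IsOpen (U i))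
    (hdisj : Pairwise (Disjoint on U)) (hcover : ⋃ i, U i = univ) (hne : ∀ i, (U i).Nonempty) :
    Subsingleton ι := by
  refine subsingleton_of_disjoint_isClopen hne hdisj fun i => ⟨?_, hopen i⟩
  have hcompl : (U i)ᶜ = ⋃ (j) (_ : j ≠ i), U j := by
    ext x
    simp only [mem_compl_iff, mem_iUnion, exists_prop]
    constructor
    · intro hx
      obtain ⟨j, hj⟩ := mem_iUnion.1 (hcover ▸ mem_univ x)
      exact ⟨j, fun h => hx (h ▸ hj), hj⟩
    · rintro ⟨j, hji, hj⟩ hi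
      exact Set.disjoint_left.1 (hdisj hji) hj hi
  rw [← isOpen_compl_iff, hcompl]
  exact isOpen_iUnion fun j => isOpen_iUnion fun _ => hopen j

section GromovHausdorff

variable {A B : Type*} [MetricSpace A] [MetricSpace B]

abbrev Sum.constCrossDistMetricSpace (r : ℝ) (hr : 0 < r) (hA : ∀ a a' : A, dist a a' ≤ 2 * r)
    (hB : ∀ b b' : B, dist b b' ≤ 2 * r) : MetricSpace (A ⊕ B) where
  dist
    | .inl a, .inl a' => dist a a'
    | .inr b, .inr b' => dist b b'
    | _, _ => r
  dist_self := by rintro (a | b) <;> simp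
  dist_comm := by rintro (a | b) (a' | b') <;> simp [dist_comm]
  dist_triangle := by
    rintro (a | b) (a' | b') (a'' | b'') <;> simp only [] <;>
      first
        | exact dist_triangle _ _ _
        | exact le_add_of_nonneg_left dist_nonneg
        | exact le_add_of_nonneg_right dist_nonneg
        | exact (hA _ _).trans_eq (two_mul r)
        | exact (hB _ _).trans_eq (two_mul r)
  eq_of_dist_eq_zero := by
    rintro (a | b) (a' | b') h <;> simp only [] at h
    · exact congrArg _ (eq_of_dist_eq_zero h)
    · exact absurd h hr.ne'
    · exact absurd h hr.ne'
    · exact congrArg _ (eq_of_dist_eq_zero h)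

variable [CompactSpace A] [Nonempty A] [CompactSpace B]

theorem ghDist_le_half_of_forall_dist_le [Nonempty B] {t : ℝ} (ht : 0 < t)
    (hA : ∀ a a' : A, dist a a' ≤ t) (hB : ∀ b b' : B, dist b b' ≤ t) :
    ghDist A B ≤ t / 2 := by
  let _ := Sum.constCrossDistMetricSpace (t / 2) (half_pos ht)
    (fun a a' => (hA a a').trans_eq (by ring)) (fun b b' => (hB b b').trans_eq (by ring))
  have hinl : Isometry (Sum.inl : A → A ⊕ B) := Isometry.of_dist_eq fun _ _ => rfl
  have hinr : Isometry (Sum.inr : B → A ⊕ B) := Isometry.of_dist_eq fun _ _ => rfl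
  refine (ghDist_le_hausdorffDist hinl hinr).trans ?_
  refine hausdorffDist_le_of_mem_dist (half_pos ht).le ?_ ?_
  · rintro _ ⟨a, rfl⟩
    exact ⟨.inr (Classical.arbitrary B), mem_range_self _, le_rfl⟩
  · rintro _ ⟨b, rfl⟩
    exact ⟨.inl (Classical.arbitrary A), mem_range_self _, le_rfl⟩

theorem half_le_ghDist_of_forall_le_dist [Nontrivial A] [ConnectedSpace B] {t : ℝ}
    (hsep : ∀ a a' : A, a ≠ a' → t ≤ dist a a') :
    t / 2 ≤ ghDist A B := by
  by_contra! hlt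
  obtain ⟨Φ, Ψ, hΦ, hΨ, hd⟩ := ghDist_eq_hausdorffDist A B
  rw [hd] at hlt
  have hfin : hausdorffEDist (range Φ) (range Ψ) ≠ ⊤ :=
    hausdorffEDist_ne_top_of_nonempty_of_bounded (range_nonempty _) (range_nonempty _)
      (isCompact_range hΦ.continuous).isBounded (isCompact_range hΨ.continuous).isBounded
  let U : A → Set B := fun a => Ψ ⁻¹' ball (Φ a) (t / 2)
  have hdisj : Pairwise (Disjoint on U) := by
    refine fun a a' hne => Set.disjoint_left.2 fun b hb hb' => (hsep a a' hne).not_gt ?_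
    rw [← hΦ.dist_eq]
    calc dist (Φ a) (Φ a') ≤ dist (Ψ b) (Φ a) + dist (Ψ b) (Φ a') := dist_triangle_left _ _ _
      _ < t / 2 + t / 2 := add_lt_add (mem_ball.1 hb) (mem_ball.1 hb')
      _ = t := add_halves t
  have hcover : ⋃ a, U a = univ := by
    refine eq_univ_of_forall fun b => ?_
    obtain ⟨_, ⟨a, rfl⟩, hab⟩ := exists_dist_lt_of_hausdorffDist_lt' (mem_range_self b) hlt hfin
    exact mem_iUnion.2 ⟨a, mem_ball_comm.1 hab⟩
  have hne : ∀ a, (U a).Nonempty := fun a => by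
    obtain ⟨_, ⟨b, rfl⟩, hab⟩ := exists_dist_lt_of_hausdorffDist_lt (mem_range_self a) hlt hfin
    exact ⟨b, mem_ball_comm.1 hab⟩
  exact not_subsingleton A <| PreconnectedSpace.subsingleton_of_disjoint_isOpen_cover
    (fun a => isOpen_ball.preimage hΨ.continuous) hdisj hcover hne

theorem ghDist_eq_half_of_forall_le_dist [Nontrivial A] [ConnectedSpace B] {t : ℝ} (ht : 0 < t)
    (hsep : ∀ a a' : A, a ≠ a' → t ≤ dist a a') (hA : ∀ a a' : A, dist a a' ≤ t)
    (hB : ∀ b b' : B, dist b b' ≤ t) :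
    ghDist A B = t / 2 :=
  (ghDist_le_half_of_forall_dist_le ht hA hB).antisymm (half_le_ghDist_of_forall_le_dist hsep)

end GromovHausdorff

namespace TopologicalSpace.NonemptyCompacts

variable {α : Type*} [MetricSpace α]

theorem dist_le_of_forall_dist_le {t : ℝ} (h : ∀ x y : α, dist x y ≤ t)
    (K L : NonemptyCompacts α) : dist K L ≤ t := by
  obtain ⟨x₀, -⟩ := K.nonempty
  rw [Metric.NonemptyCompacts.dist_eq]
  refine hausdorffDist_le_of_mem_dist (dist_nonneg.trans (h x₀ x₀)) ?_ ?_
  · exact fun x _ => ⟨L.nonempty.some, L.nonempty.some_mem, h _ _⟩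
  · exact fun x _ => ⟨K.nonempty.some, K.nonempty.some_mem, h _ _⟩

theorem le_dist_of_ne {t : ℝ} (hsep : ∀ x y : α, x ≠ y → t ≤ dist x y)
    {K L : NonemptyCompacts α} (hKL : K ≠ L) : t ≤ dist K L := by
  by_contra! hlt
  rw [Metric.NonemptyCompacts.dist_eq] at hlt
  have hfin : hausdorffEDist (K : Set α) L ≠ ⊤ :=
    hausdorffEDist_ne_top_of_nonempty_of_bounded K.nonempty L.nonempty
      K.isCompact.isBounded L.isCompact.isBounded
  have heq_of_dist_lt : ∀ {x y : α}, dist x y < t → x = y := fun hxy =>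
    not_not.1 fun hne => (hsep _ _ hne).not_gt hxy
  refine hKL (NonemptyCompacts.ext (Subset.antisymm (fun x hx => ?_) (fun y hy => ?_)))
  · obtain ⟨y, hy, hxy⟩ := exists_dist_lt_of_hausdorffDist_lt hx hlt hfin
    exact heq_of_dist_lt hxy ▸ hy
  · obtain ⟨x, hx, hxy⟩ := exists_dist_lt_of_hausdorffDist_lt' hy hlt hfin
    exact heq_of_dist_lt hxy ▸ hx

section Preconnected

variable [PreconnectedSpace α]

theorem sup_singleton_mem_connectedComponent (K : NonemptyCompacts α) (x : α) :
    K ⊔ {x} ∈ connectedComponent K := by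
  obtain ⟨a, ha⟩ := K.nonempty
  have hcont : Continuous fun y : α => K ⊔ {y} :=
    lipschitz_sup.continuous.comp (continuous_const.prodMk isometry_singleton.continuous)
  refine (isPreconnected_range hcont).subset_connectedComponent ⟨a, ?_⟩ (mem_range_self x)
  exact sup_eq_left.2 (singleton_subset_iff.2 ha)

theorem exists_mem_connectedComponent_coe_eq_union (s : Finset α) (K : NonemptyCompacts α) :
    ∃ L ∈ connectedComponent K, (L : Set α) = (K : Set α) ∪ s := by
  classical
  induction s using Finset.induction_on generalizing K with
  | empty => exact ⟨K, mem_connectedComponent, by simp⟩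
  | insert x s _ ih =>
    obtain ⟨L, hL, hLs⟩ := ih (K ⊔ {x})
    refine ⟨L, connectedComponent_eq (sup_singleton_mem_connectedComponent K x) ▸ hL, ?_⟩
    simp [hLs, union_insert, insert_union]

theorem sup_mem_connectedComponent (K L : NonemptyCompacts α) :
    K ⊔ L ∈ connectedComponent K := by
  rw [← isClosed_connectedComponent.closure_eq, Metric.mem_closure_iff]
  intro ε hε
  obtain ⟨s, hsL, hs, hLs⟩ :=
    finite_approx_of_totallyBounded L.isCompact.totallyBounded (ε / 2) (half_pos hε)
  obtain ⟨M, hM, hMs⟩ := exists_mem_connectedComponent_coe_eq_union hs.toFinset K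
  refine ⟨M, hM, ?_⟩
  rw [Metric.NonemptyCompacts.dist_eq, coe_sup, hMs, hs.coe_toFinset]
  have hself : ∀ x : α, dist x x ≤ ε / 2 := fun x => (dist_self x).trans_le (half_pos hε).le
  refine (hausdorffDist_le_of_mem_dist (half_pos hε).le ?_ ?_).trans_lt (half_lt_self hε)
  · rintro x (hx | hx)
    · exact ⟨x, .inl hx, hself x⟩
    · obtain ⟨y, hy, hxy⟩ := mem_iUnion₂.1 (hLs hx)
      exact ⟨y, .inr hy, (mem_ball.1 hxy).le⟩
  · rintro x (hx | hx)
    · exact ⟨x, .inl hx, hself x⟩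
    · exact ⟨x, .inr (hsL hx), hself x⟩

end Preconnected

instance [ConnectedSpace α] : ConnectedSpace (NonemptyCompacts α) := by
  refine connectedSpace_iff_connectedComponent.2
    ⟨{Classical.arbitrary α}, eq_univ_of_forall fun L => ?_⟩
  rw [connectedComponent_eq (sup_mem_connectedComponent _ L), sup_comm,
    ← connectedComponent_eq (sup_mem_connectedComponent L _)]
  exact mem_connectedComponent

end TopologicalSpace.NonemptyCompacts

theorem stmt_17_general (X : Type*) [MetricSpace X] [CompactSpace X] [ConnectedSpace X]
    (t : ℝ) (ht : 0 < t) (hdiam : Metric.diam (Set.univ : Set X) ≤ t)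
    (p : ℕ) (hp : 2 ≤ p) (S : Type*) [MetricSpace S] [Finite S] [Nonempty S]
    (hScard : Nat.card S = p) (hSdist : ∀ x y : S, x ≠ y → dist x y = t) :
    ghDist (NonemptyCompacts S) (NonemptyCompacts X) = ghDist S X ∧
      ghDist S X = t / 2 := by
  have : Nontrivial S := Finite.one_lt_card_iff_nontrivial.1 (hScard ▸ hp)
  have hSsep : ∀ x y : S, x ≠ y → t ≤ dist x y := fun x y hxy => (hSdist x y hxy).ge
  have hSle : ∀ x y : S, dist x y ≤ t := fun x y => by
    rcases eq_or_ne x y with rfl | hxy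
    · exact (dist_self x).trans_le ht.le
    · exact (hSdist x y hxy).le
  have hXle : ∀ x y : X, dist x y ≤ t := fun x y =>
    (dist_le_diam_of_mem isBounded_of_compactSpace (mem_univ x) (mem_univ y)).trans hdiam
  have hS : ghDist S X = t / 2 := ghDist_eq_half_of_forall_le_dist ht hSsep hSle hXle
  have hH : ghDist (NonemptyCompacts S) (NonemptyCompacts X) = t / 2 :=
    ghDist_eq_half_of_forall_le_dist ht (fun _ _ => NonemptyCompacts.le_dist_of_ne hSsep)
      (NonemptyCompacts.dist_le_of_forall_dist_le hSle)
      (NonemptyCompacts.dist_le_of_forall_dist_le hXle)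
  exact ⟨hH.trans hS.symm, hS⟩

theorem stmt_17 (X : Type*) [MetricSpace X] [CompactSpace X] [ConnectedSpace X] [Nonempty X]
    (t : ℝ) (ht : 0 < t) (hdiam : Metric.diam (Set.univ : Set X) ≤ t)
    (p : ℕ) (hp : 2 ≤ p) (S : Type*) [MetricSpace S] [Finite S] [Nonempty S]
    (hScard : Nat.card S = p) (hSdist : ∀ x y : S, x ≠ y → dist x y = t) :
    ghDist (NonemptyCompacts S) (NonemptyCompacts X) = ghDist S X ∧
      ghDist S X = t / 2 :=
  stmt_17_general X t ht hdiam p hp S hScard hSdist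
end
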